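/- arXiv:math/0412164 — 2 statements merged into one kernel-verified Lean document; each statement's English description precedes it below -/
import Mathlib

section
/- Let R be a bounded operator on ℂⁿ ⊗ H (H a complex Hilbert space) with n × n operator block entries R_{ij} ∈ L(H), and suppose R + R* ≥ s·I for some s > 0. Suppose Λ ∈ ℂ^{n×n} is such that there exists a sequence of unit vectors h_ν ∈ H with (R_{ij} − Λ_{ij}·I_H)h_ν → 0 for all i, j (i.e., Λ is in the approximate point spectrum of the commuting tuple (R_{ij})). Then Λ + Λ* ≥ s·I_n as matrices. -/
open scoped Matrix ComplexOrder

/-- The operator on `ℂⁿ ⊗ H` determined by an `n × n` block matrix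
`(R_{ij})` of bounded operators on `H`. -/
noncomputable def blockMatOp {n : ℕ} {H : Type*}
    [NormedAddCommGroup H] [InnerProductSpace ℂ H]
    (R : Fin n → Fin n → (H →L[ℂ] H)) :
    PiLp 2 (fun _ : Fin n => H) →L[ℂ] PiLp 2 (fun _ : Fin n => H) :=
  (((PiLp.continuousLinearEquiv 2 ℂ (fun _ : Fin n => H)).symm :
      (∀ _ : Fin n, H) →L[ℂ] PiLp 2 (fun _ : Fin n => H)).comp
    (ContinuousLinearMap.pi fun i => ∑ j, (R i j).comp (ContinuousLinearMap.proj j))).comp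
    ((PiLp.continuousLinearEquiv 2 ℂ (fun _ : Fin n => H)) :
      PiLp 2 (fun _ : Fin n => H) →L[ℂ] (∀ _ : Fin n, H))

/-!
Testing `R + R* ≥ s` on the vectors `u ⊗ h_ν` gives `s‖u‖² ≤ 2 Re ⟪M_ν u, u⟫`, where
`M_ν = (⟪h_ν, R_{ij} h_ν⟫)_{ij}` is the compression of `R` to `ℂⁿ ⊗ h_ν`. Since
`(R_{ij} − Λ_{ij}) h_ν → 0` and `‖h_ν‖ = 1`, the compressions `M_ν` converge to `Λ`, and in
the limit `s‖u‖² ≤ 2 Re ⟪Λ u, u⟫ = Re ⟪(Λ + Λ*) u, u⟫`.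
-/

open Filter Topology

section InnerProductSpace

variable {𝕜 E : Type*} [RCLike 𝕜] [NormedAddCommGroup E] [InnerProductSpace 𝕜 E]

theorem tendsto_inner_of_tendsto_sub_smul {h g : ℕ → E} {c : 𝕜} (hnorm : ∀ ν, ‖h ν‖ = 1)
    (hconv : Tendsto (fun ν => g ν - c • h ν) atTop (𝓝 0)) :
    Tendsto (fun ν => inner 𝕜 (h ν) (g ν)) atTop (𝓝 c) := by
  have hdiff : ∀ ν, inner 𝕜 (h ν) (g ν) - c = inner 𝕜 (h ν) (g ν - c • h ν) := by
    intro ν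
    rw [inner_sub_right, inner_smul_right, inner_self_eq_norm_sq_to_K, hnorm]
    simp
  rw [tendsto_iff_norm_sub_tendsto_zero]
  refine squeeze_zero (fun _ => norm_nonneg _) (fun ν => ?_) (by simpa using hconv.norm)
  simpa [hdiff, hnorm] using norm_inner_le_norm (𝕜 := 𝕜) (h ν) (g ν - c • h ν)

theorem re_inner_add_adjoint_apply_self [CompleteSpace E] (T : E →L[𝕜] E) (x : E) :
    RCLike.re (inner 𝕜 ((T + T.adjoint) x) x) = 2 * RCLike.re (inner 𝕜 (T x) x) := by
  rw [add_apply, inner_add_left, map_add, ContinuousLinearMap.adjoint_inner_left,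
    ← inner_conj_symm, RCLike.conj_re]
  ring

variable {ι : Type*} [Fintype ι]

def pureTensor (u : EuclideanSpace 𝕜 ι) (h : E) : PiLp 2 (fun _ : ι => E) :=
  WithLp.toLp 2 fun i => u i • h

theorem norm_pureTensor (u : EuclideanSpace 𝕜 ι) (h : E) :
    ‖pureTensor u h‖ = ‖u‖ * ‖h‖ := by
  simp only [pureTensor, PiLp.norm_eq_of_L2, norm_smul, mul_pow, ← Finset.sum_mul]
  rw [Real.sqrt_mul (Finset.sum_nonneg fun _ _ => sq_nonneg _), Real.sqrt_sq (norm_nonneg h)]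

end InnerProductSpace

namespace Matrix

variable {ι 𝕜 : Type*} [RCLike 𝕜] [Fintype ι] [DecidableEq ι]

theorem re_inner_toEuclideanCLM_add_conjTranspose (A : Matrix ι ι 𝕜)
    (u : EuclideanSpace 𝕜 ι) :
    RCLike.re (inner 𝕜 (toEuclideanCLM (𝕜 := 𝕜) (A + Aᴴ) u) u)
      = 2 * RCLike.re (inner 𝕜 (toEuclideanCLM (𝕜 := 𝕜) A u) u) := by
  rw [map_add, ← star_eq_conjTranspose, map_star, ContinuousLinearMap.star_eq_adjoint,
    re_inner_add_adjoint_apply_self]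

theorem continuous_inner_toEuclideanCLM_apply_self (u : EuclideanSpace 𝕜 ι) :
    Continuous fun A : Matrix ι ι 𝕜 => inner 𝕜 (toEuclideanCLM (𝕜 := 𝕜) A u) u := by
  rw [← WithLp.toLp_ofLp (p := 2) u]
  simp only [toEuclideanCLM_toLp]
  fun_prop

end Matrix

section BlockMatOp

variable {n : ℕ} {H : Type*} [NormedAddCommGroup H] [InnerProductSpace ℂ H]

theorem blockMatOp_apply (R : Fin n → Fin n → (H →L[ℂ] H)) (x : PiLp 2 (fun _ : Fin n => H))
    (i : Fin n) :
    blockMatOp R x i = ∑ j, R i j (x j) := by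
  simp [blockMatOp]

noncomputable def compressionMatrix (R : Fin n → Fin n → (H →L[ℂ] H)) (h : H) :
    Matrix (Fin n) (Fin n) ℂ :=
  Matrix.of fun i j => inner ℂ h (R i j h)

theorem inner_blockMatOp_pureTensor (R : Fin n → Fin n → (H →L[ℂ] H))
    (u : EuclideanSpace ℂ (Fin n)) (h : H) :
    inner ℂ (blockMatOp R (pureTensor u h)) (pureTensor u h)
      = inner ℂ (Matrix.toEuclideanCLM (𝕜 := ℂ) (compressionMatrix R h) u) u := by
  rw [← WithLp.toLp_ofLp (p := 2) u]
  simp only [Matrix.toEuclideanCLM_toLp, PiLp.inner_apply, blockMatOp_apply, pureTensor,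
    Matrix.mulVec, dotProduct, sum_inner, map_smul, inner_smul_left, inner_smul_right,
    compressionMatrix, RCLike.inner_apply, Matrix.of_apply, map_sum, map_mul, inner_conj_symm]
  simp_rw [mul_comm ((starRingEnd ℂ) _)]

theorem tendsto_compressionMatrix (R : Fin n → Fin n → (H →L[ℂ] H))
    (Λ : Matrix (Fin n) (Fin n) ℂ) {h : ℕ → H} (hnorm : ∀ ν, ‖h ν‖ = 1)
    (hconv : ∀ i j, Tendsto (fun ν => R i j (h ν) - Λ i j • h ν) atTop (𝓝 0)) :
    Tendsto (fun ν => compressionMatrix R (h ν)) atTop (𝓝 Λ) :=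
  tendsto_pi_nhds.2 fun i => tendsto_pi_nhds.2 fun j =>
    tendsto_inner_of_tendsto_sub_smul hnorm (hconv i j)

end BlockMatOp

theorem approx_spectrum_accretive_general {n : ℕ} {H : Type*}
    [NormedAddCommGroup H] [InnerProductSpace ℂ H]
    (R : Fin n → Fin n → (H →L[ℂ] H)) (s : ℝ)
    (hR : ∀ x : PiLp 2 (fun _ : Fin n => H),
      s * ‖x‖ ^ 2 ≤ 2 * ((inner ℂ ((blockMatOp R) x) x : ℂ)).re)
    (Λ : Matrix (Fin n) (Fin n) ℂ)
    (h : ℕ → H) (hnorm : ∀ ν, ‖h ν‖ = 1)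
    (hconv : ∀ i j, Filter.Tendsto (fun ν => R i j (h ν) - Λ i j • h ν)
      Filter.atTop (nhds 0)) :
    ∀ u : EuclideanSpace ℂ (Fin n),
      s * ‖u‖ ^ 2 ≤
        ((inner ℂ ((Matrix.toEuclideanCLM (𝕜 := ℂ) (Λ + Λᴴ)) u) u : ℂ)).re := by
  intro u
  have hlim : Tendsto
      (fun ν => 2 * (inner ℂ (Matrix.toEuclideanCLM (𝕜 := ℂ) (compressionMatrix R (h ν)) u) u).re)
      atTop (𝓝 (2 * (inner ℂ (Matrix.toEuclideanCLM (𝕜 := ℂ) Λ u) u).re)) :=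
    (((Complex.continuous_re.comp (Matrix.continuous_inner_toEuclideanCLM_apply_self u)).tendsto
      Λ).comp (tendsto_compressionMatrix R Λ hnorm hconv)).const_mul 2
  rw [← RCLike.re_to_complex, Matrix.re_inner_toEuclideanCLM_add_conjTranspose]
  refine ge_of_tendsto' hlim fun ν => ?_
  calc s * ‖u‖ ^ 2 = s * ‖pureTensor u (h ν)‖ ^ 2 := by rw [norm_pureTensor, hnorm, mul_one]
    _ ≤ 2 * (inner ℂ (blockMatOp R (pureTensor u (h ν))) (pureTensor u (h ν))).re := hR _
    _ = _ := by rw [inner_blockMatOp_pureTensor]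

/-- If the block operator `R = (R_{ij})` on `ℂⁿ ⊗ H` satisfies `R + R* ≥ s·I`
(`s > 0`), and `Λ ∈ ℂ^{n×n}` lies in the approximate point spectrum of the tuple
`(R_{ij})` — witnessed by unit vectors `h_ν` with `(R_{ij} − Λ_{ij})h_ν → 0` —
then `Λ + Λ* ≥ s·I_n`. -/
theorem approx_spectrum_accretive {n : ℕ} {H : Type*}
    [NormedAddCommGroup H] [InnerProductSpace ℂ H]
    (R : Fin n → Fin n → (H →L[ℂ] H)) (s : ℝ) (hs : 0 < s)
    (hR : ∀ x : PiLp 2 (fun _ : Fin n => H),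
      s * ‖x‖ ^ 2 ≤ 2 * ((inner ℂ ((blockMatOp R) x) x : ℂ)).re)
    (Λ : Matrix (Fin n) (Fin n) ℂ)
    (h : ℕ → H) (hnorm : ∀ ν, ‖h ν‖ = 1)
    (hconv : ∀ i j, Filter.Tendsto (fun ν => R i j (h ν) - Λ i j • h ν)
      Filter.atTop (nhds 0)) :
    ∀ u : EuclideanSpace ℂ (Fin n),
      s * ‖u‖ ^ 2 ≤
        ((inner ℂ ((Matrix.toEuclideanCLM (𝕜 := ℂ) (Λ + Λᴴ)) u) u : ℂ)).re :=
  approx_spectrum_accretive_general R s hR Λ h hnorm hconv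
end

section
/- Let U be a complex Hilbert space, F : U → U a bounded operator with 1 ∉ σ(F) (so I − F invertible), and set f = (I + F)(I − F)⁻¹. Then for another such operator G with 1 ∉ σ(G): f + ((I + G)(I − G)⁻¹)* = 2 (I − G*)⁻¹ (I − G* F) (I − F)⁻¹. -/
/-- For bounded operators `F, G` on a complex Hilbert space with `1 ∉ σ(F)` and
`1 ∉ σ(G)` (witnessed by two-sided inverses `F'` of `I − F` and `G'` of `I − G`),
setting `f = (I+F)(I−F)⁻¹`:
`f + ((I+G)(I−G)⁻¹)* = 2 (I − G*)⁻¹ (I − G*F) (I − F)⁻¹`. -/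
theorem cayley_operator_identity_plus
    {U : Type*} [NormedAddCommGroup U] [InnerProductSpace ℂ U] [CompleteSpace U]
    (F G F' G' : U →L[ℂ] U)
    (hF1 : (1 - F) * F' = 1) (hF2 : F' * (1 - F) = 1)
    (hG1 : (1 - G) * G' = 1) (hG2 : G' * (1 - G) = 1) :
    (1 + F) * F' + ContinuousLinearMap.adjoint ((1 + G) * G') =
      2 * (ContinuousLinearMap.adjoint G' *
        (1 - ContinuousLinearMap.adjoint G * F) * F') := by
  simp only [← ContinuousLinearMap.star_eq_adjoint]
  set a := star G' with ha
  set g := star G with hg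
  have ha1 : a * (1 - g) = 1 := by
    have := congrArg star hG1
    simpa [star_mul, star_sub, ha, hg] using this
  have ha2 : (1 - g) * a = 1 := by
    have := congrArg star hG2
    simpa [star_mul, star_sub, ha, hg] using this
  have hadj : star ((1 + G) * G') = a * (1 + g) := by
    simp [star_mul, star_add, ha, hg]
  rw [hadj]
  have key : (1 - g) * (1 + F) + (1 + g) * (1 - F) = 2 * (1 - g * F) := by
    noncomm_ring
  calc (1 + F) * F' + a * (1 + g)
      = (a * (1 - g)) * ((1 + F) * F') + a * ((1 + g) * ((1 - F) * F')) := by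
        rw [ha1, hF1, one_mul, mul_one]
    _ = a * (((1 - g) * (1 + F) + (1 + g) * (1 - F)) * F') := by
        noncomm_ring
    _ = a * ((2 * (1 - g * F)) * F') := by rw [key]
    _ = 2 * (a * (1 - g * F) * F') := by noncomm_ring
end
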